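/- Let X be a topological space and (h_n)_{n≥0} continuous real-valued functions on X with h_0 : X → [0,1]. Define A_n = ⋂_{k=0}^{n} h_k⁻¹((−1/n, 1/n)) and B_n = ⋂_{k=0}^{n} h_k⁻¹([−1/n, 1/n]) for n ≥ 1, and F = ⋂_{n≥0} h_n⁻¹(0). Set G_n = A_n \ B_{n+2} for n ≥ 1 and G_0 = (X \ F) \ B_2. Then ⋃_{n≥0} G_n = X \ F, and the family (G_n)_{n≥0} is locally finite on X \ F. -/
import Mathlib


open Set Filter Topology

theorem stmt4 {X : Type*} [TopologicalSpace X]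
    (h : ℕ → X → ℝ) (hh : ∀ n, Continuous (h n)) (hh0 : ∀ x, h 0 x ∈ Icc (0:ℝ) 1)
    (A B : ℕ → Set X) (F : Set X) (G : ℕ → Set X)
    (hA : ∀ n, 1 ≤ n → A n = ⋂ k ∈ Finset.range (n+1), (h k) ⁻¹' (Ioo (-(1/(n:ℝ))) (1/(n:ℝ))))
    (hB : ∀ n, 1 ≤ n → B n = ⋂ k ∈ Finset.range (n+1), (h k) ⁻¹' (Icc (-(1/(n:ℝ))) (1/(n:ℝ))))
    (hF : F = ⋂ n, (h n) ⁻¹' {0})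
    (hGn : ∀ n, 1 ≤ n → G n = A n \ B (n+2))
    (hG0 : G 0 = (F ᶜ) \ B 2) :
    (⋃ n, G n) = Fᶜ ∧
      ∀ x ∈ Fᶜ, ∃ U : Set X, IsOpen U ∧ x ∈ U ∧
        {n : ℕ | (U ∩ Fᶜ ∩ G n).Nonempty}.Finite := by
  classical
  -- membership characterizations
  have hBmem : ∀ n, 1 ≤ n → ∀ x : X,
      x ∈ B n ↔ ∀ k ≤ n, h k x ∈ Icc (-(1/(n:ℝ))) (1/(n:ℝ)) := by
    intro n hn x
    rw [hB n hn]
    simp [Nat.lt_succ_iff]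
  have hAmem : ∀ n, 1 ≤ n → ∀ x : X,
      x ∈ A n ↔ ∀ k ≤ n, h k x ∈ Ioo (-(1/(n:ℝ))) (1/(n:ℝ)) := by
    intro n hn x
    rw [hA n hn]
    simp [Nat.lt_succ_iff]
  -- F ⊆ B n
  have hFB : ∀ n, 1 ≤ n → F ⊆ B n := by
    intro n hn x hx
    rw [hBmem n hn]
    intro k _
    have hk0 : h k x = 0 := by
      rw [hF] at hx
      simpa using mem_iInter.mp hx k
    have hpos : (0:ℝ) ≤ 1/(n:ℝ) := by positivity
    rw [hk0]
    exact ⟨by linarith, hpos⟩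
  -- B is antitone
  have hBsub : ∀ m n, 1 ≤ m → m ≤ n → B n ⊆ B m := by
    intro m n hm hmn x hx
    have hn : 1 ≤ n := le_trans hm hmn
    rw [hBmem n hn] at hx
    rw [hBmem m hm]
    intro k hk
    obtain ⟨h1, h2⟩ := hx k (le_trans hk hmn)
    have hmpos : (0:ℝ) < (m:ℝ) := by exact_mod_cast hm
    have hle : (1:ℝ)/(n:ℝ) ≤ 1/(m:ℝ) := by
      apply one_div_le_one_div_of_le hmpos
      exact_mod_cast hmn
    exact ⟨by linarith, by linarith⟩
  -- A n ⊆ B n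
  have hAB : ∀ n, 1 ≤ n → A n ⊆ B n := by
    intro n hn x hx
    rw [hAmem n hn] at hx
    rw [hBmem n hn]
    intro k hk
    obtain ⟨h1, h2⟩ := hx k hk
    exact ⟨le_of_lt h1, le_of_lt h2⟩
  -- B (n+1) ⊆ A n
  have hBA : ∀ n, 1 ≤ n → B (n+1) ⊆ A n := by
    intro n hn x hx
    rw [hBmem (n+1) (by omega)] at hx
    rw [hAmem n hn]
    intro k hk
    obtain ⟨h1, h2⟩ := hx k (by omega)
    have hnpos : (0:ℝ) < (n:ℝ) := by exact_mod_cast hn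
    have hlt : (1:ℝ)/((n:ℝ)+1) < 1/(n:ℝ) := by
      apply one_div_lt_one_div_of_lt hnpos
      linarith
    have hcast : ((n+1:ℕ):ℝ) = (n:ℝ)+1 := by push_cast; ring
    rw [hcast] at h1 h2
    exact ⟨by linarith, by linarith⟩
  -- for x ∉ F, there is m ≥ 2 with x ∉ B m
  have hnotB : ∀ x : X, x ∉ F → ∃ m, 2 ≤ m ∧ x ∉ B m := by
    intro x hx
    rw [hF] at hx
    simp only [mem_iInter, mem_preimage, mem_singleton_iff, not_forall] at hx
    obtain ⟨k, hk⟩ := hx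
    have habs : 0 < |h k x| := abs_pos.mpr hk
    obtain ⟨N, hN⟩ := exists_nat_one_div_lt habs
    refine ⟨max (N+1) (max k 2), le_trans (by omega) (le_max_right _ _), ?_⟩
    intro hxB
    set m := max (N+1) (max k 2) with hm
    have hm1 : 1 ≤ m := by omega
    rw [hBmem m hm1] at hxB
    have hkm : k ≤ m := le_trans (le_max_left _ _) (le_max_right _ _)
    obtain ⟨h1, h2⟩ := hxB k hkm
    have hNm : (N:ℝ)+1 ≤ (m:ℝ) := by exact_mod_cast le_max_left (N+1) (max k 2)
    have hNpos : (0:ℝ) < (N:ℝ)+1 := by positivity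
    have : (1:ℝ)/(m:ℝ) ≤ 1/((N:ℝ)+1) := one_div_le_one_div_of_le hNpos hNm
    have habs2 : |h k x| ≤ 1/(m:ℝ) := abs_le.mpr ⟨by linarith, h2⟩
    linarith
  -- G n ⊆ Fᶜ
  have hGF : ∀ n, G n ⊆ Fᶜ := by
    intro n
    rcases Nat.eq_zero_or_pos n with rfl | hn
    · rw [hG0]; exact diff_subset
    · rw [hGn n hn]
      intro x hx hxF
      exact hx.2 (hFB (n+2) (by omega) hxF)
  constructor
  · apply Subset.antisymm
    · exact iUnion_subset hGF
    · intro x hx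
      obtain ⟨m, hm2, hxm⟩ := hnotB x hx
      have hex : ∃ j, x ∉ B (j+2) := ⟨m-2, by rwa [Nat.sub_add_cancel hm2]⟩
      set j0 := Nat.find hex with hj0
      have hj0spec : x ∉ B (j0+2) := Nat.find_spec hex
      rcases Nat.eq_zero_or_pos j0 with hz | hpos
      · refine mem_iUnion.mpr ⟨0, ?_⟩
        rw [hG0]
        exact ⟨hx, by rwa [hz] at hj0spec⟩
      · obtain ⟨n, hne⟩ : ∃ n, j0 = n + 1 := ⟨j0 - 1, by omega⟩
        refine mem_iUnion.mpr ⟨n+1, ?_⟩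
        rw [hGn (n+1) (by omega)]
        have hfind : Nat.find hex = n + 1 := by rw [← hj0, hne]
        have hxBn2 : x ∈ B (n+2) := by
          by_contra hc
          exact absurd (Nat.find_min hex (m := n) (by omega)) (by simpa using hc)
        rw [hne] at hj0spec
        exact ⟨hBA (n+1) (by omega) hxBn2, by simpa using hj0spec⟩
  · intro x hx
    obtain ⟨m, hm2, hxm⟩ := hnotB x hx
    refine ⟨(B m)ᶜ, ?_, hxm, ?_⟩
    · rw [isOpen_compl_iff, hB m (by omega)]
      exact isClosed_biInter fun k _ => (isClosed_Icc).preimage (hh k)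
    · apply Set.Finite.subset (Set.finite_lt_nat m)
      intro n hn
      simp only [mem_setOf_eq] at hn ⊢
      by_contra hnm
      push_neg at hnm
      obtain ⟨y, ⟨⟨hyU, _⟩, hyG⟩⟩ := hn
      have hn1 : 1 ≤ n := by omega
      rw [hGn n hn1] at hyG
      have : y ∈ B m := hBsub m n (by omega) hnm (hAB n hn1 hyG.1)
      exact hyU this
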